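/- Let F be a finite bipartite graph on vertex set {1,…,n} whose edge set is partitioned into two sets E′ (blue edges) and E″ (red edges), and let W ∈ 𝒲. (a) If ∏_{ij∈E′} W(x_i,x_j) · ∏_{ij∈E″} (1 − W(x_i,x_j)) = 0 for almost every (x₁,…,x_n) ∈ [0,1]ⁿ, then W(x,y) ∈ {0,1} for almost every (x,y) ∈ [0,1]². (b) If moreover W ∈ 𝒲₀, then the single equation ∫_{[0,1]ⁿ} ∏_{ij∈E′} W(x_i,x_j) ∏_{ij∈E″} (1 − W(x_i,x_j)) dx₁⋯dx_n = 0 already implies W(x,y) ∈ {0,1} almost everywhere. -/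

import Mathlib

open MeasureTheory
open scoped Classical

noncomputable section

/-- The unit interval `[0,1]` as a subset of `ℝ`. -/
def I01 : Set ℝ := Set.Icc 0 1

/-- The cube `[0,1]^n`. -/
def cube (n : ℕ) : Set (Fin n → ℝ) := Set.univ.pi fun _ => I01

/-- `W` belongs to `𝒲`: a bounded symmetric measurable function on `[0,1]²`. -/
def memW (W : ℝ → ℝ → ℝ) : Prop :=
  Measurable (Function.uncurry W) ∧
  (∀ x ∈ I01, ∀ y ∈ I01, W x y = W y x) ∧
  ∃ C : ℝ, ∀ x ∈ I01, ∀ y ∈ I01, |W x y| ≤ C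

/-- `W` belongs to `𝒲₀`: a graphon, i.e. symmetric measurable with values in `[0,1]`. -/
def memW0 (W : ℝ → ℝ → ℝ) : Prop :=
  Measurable (Function.uncurry W) ∧
  (∀ x ∈ I01, ∀ y ∈ I01, W x y = W y x) ∧
  ∀ x ∈ I01, ∀ y ∈ I01, W x y ∈ Set.Icc (0 : ℝ) 1

/-- Homomorphism density `t(F,W)` of a finite simple graph `F` in `W`. -/
def homDensity {n : ℕ} (F : SimpleGraph (Fin n)) (W : ℝ → ℝ → ℝ) : ℝ :=
  ∫ x in cube n,
    ∏ p ∈ Finset.univ.filter (fun p : Fin n × Fin n => p.1 < p.2 ∧ F.Adj p.1 p.2),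
      W (x p.1) (x p.2)

/-- Two kernels are weakly isomorphic if all their homomorphism densities agree. -/
def WeaklyIsomorphic (U W : ℝ → ℝ → ℝ) : Prop :=
  ∀ (n : ℕ) (F : SimpleGraph (Fin n)), homDensity F U = homDensity F W

/-- `W` is finitely forcible within the class `A`. -/
def FinitelyForcible (A : (ℝ → ℝ → ℝ) → Prop) (W : ℝ → ℝ → ℝ) : Prop :=
  A W ∧ ∃ (k : ℕ) (n : Fin k → ℕ) (F : ∀ i, SimpleGraph (Fin (n i))),
    ∀ U, A U → (∀ i, homDensity (F i) U = homDensity (F i) W) → WeaklyIsomorphic U W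

/-- Density function `t^k(F,W)` of a `k`-labeled graph, as a function of the
labeled variables; the graph has `k` labeled and `m` unlabeled vertices. -/
def labDensity {k m : ℕ} (F : SimpleGraph (Fin (k + m))) (W : ℝ → ℝ → ℝ)
    (x : Fin k → ℝ) : ℝ :=
  ∫ y in cube m,
    ∏ p ∈ Finset.univ.filter
        (fun p : Fin (k + m) × Fin (k + m) => p.1 < p.2 ∧ F.Adj p.1 p.2),
      W (Fin.append x y p.1) (Fin.append x y p.2)

/-!
Suppose `W ∉ {0, 1}` on a set `A ⊆ [0,1]²` of positive measure. A Lebesgue density point of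
`A` gives a square `S × T` of which `A` misses less than a `1/|E(F)|` fraction. Put the vertices
of one colour class of `F` in `S` and those of the other in `T`: by a union bound over the edges
(using the symmetry of `A` for edges oriented from `T` to `S`), a positive proportion of these
configurations sends every edge into `A`, where the integrand does not vanish. For a graphon the
integrand is nonnegative, so a vanishing integral forces it to vanish a.e.
-/

open Set Function
open scoped ENNReal

namespace MeasureTheory.Measure

section Pi

variable {ι : Type*} [Fintype ι] {α : ι → Type*} [∀ i, MeasurableSpace (α i)]
  (μ : ∀ i, Measure (α i)) [∀ i, IsFiniteMeasure (μ i)]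

lemma pi_map_pair [DecidableEq ι] {i j : ι} (hij : i ≠ j) :
    (Measure.pi μ).map (fun x => (x i, x j)) =
      (∏ k ∈ (Finset.univ.erase i).erase j, μ k univ) • (μ i).prod (μ j) := by
  refine ext_prod fun {s t} hs ht => ?_
  have hpre : (fun x : ∀ k, α k => (x i, x j)) ⁻¹' (s ×ˢ t) =
      univ.pi (update (update (fun k => (univ : Set (α k))) i s) j t) := by
    ext x
    simp only [mem_preimage, mem_prod, mem_pi, mem_univ, forall_const]
    refine ⟨fun h k => ?_, fun h => ⟨by simpa [hij] using h i, by simpa using h j⟩⟩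
    by_cases hkj : k = j
    · subst hkj; simpa using h.2
    by_cases hki : k = i
    · subst hki; simpa [hkj] using h.1
    simp [hki, hkj]
  rw [map_apply (by fun_prop) (hs.prod ht), hpre, pi_pi, smul_apply, prod_prod, smul_eq_mul,
    ← Finset.prod_erase_mul _ _ (Finset.mem_univ i),
    ← Finset.prod_erase_mul _ _ (Finset.mem_erase.2 ⟨hij.symm, Finset.mem_univ j⟩)]
  simp only [update_self, update_of_ne hij]
  rw [mul_assoc, mul_comm (μ j t)]
  congr 1
  refine Finset.prod_congr rfl fun k hk => ?_
  simp [Finset.ne_of_mem_erase hk, Finset.ne_of_mem_erase (Finset.mem_of_mem_erase hk)]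

lemma pi_univ_pi_inter_preimage_pair_mul {J : ∀ i, Set (α i)}
    (hJ : ∀ i, MeasurableSet (J i)) {i j : ι} (hij : i ≠ j) {D : Set (α i × α j)}
    (hD : MeasurableSet D) :
    Measure.pi μ (univ.pi J ∩ (fun x => (x i, x j)) ⁻¹' D) * (μ i (J i) * μ j (J j)) =
      Measure.pi μ (univ.pi J) * ((μ i).prod (μ j)) (J i ×ˢ J j ∩ D) := by
  classical
  rw [inter_comm, ← restrict_apply' (MeasurableSet.univ_pi hJ), restrict_pi_pi,
    ← map_apply (by fun_prop) hD, pi_map_pair _ hij, pi_pi,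
    ← Finset.prod_erase_mul _ _ (Finset.mem_univ i),
    ← Finset.prod_erase_mul _ _ (Finset.mem_erase.2 ⟨hij.symm, Finset.mem_univ j⟩),
    smul_apply, smul_eq_mul, prod_restrict,
    restrict_apply' ((hJ i).prod (hJ j)), inter_comm D]
  simp only [restrict_apply_univ]
  ring

end Pi

lemma prod_self_prod_comm_inter {α : Type*} [MeasurableSpace α] (ν : Measure α)
    [SigmaFinite ν] {A : Set (α × α)} (hA : MeasurableSet A) (hsymm : Prod.swap ⁻¹' A = A)
    {S T : Set α} (hS : MeasurableSet S) (hT : MeasurableSet T) :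
    (ν.prod ν) (T ×ˢ S ∩ A) = (ν.prod ν) (S ×ˢ T ∩ A) := by
  rw [← (measurePreserving_swap (μ := ν) (ν := ν)).measure_preimage
      ((hS.prod hT).inter hA).nullMeasurableSet, preimage_inter, preimage_swap_prod, hsymm]

lemma pi_setOf_forall_pair_mem_ne_zero {ι α : Type*} [Fintype ι] [MeasurableSpace α]
    (ν : Measure α) [IsFiniteMeasure ν] (side : ι → Bool)
    {E : Finset (ι × ι)} (hE : ∀ e ∈ E, side e.1 ≠ side e.2) {A : Set (α × α)}
    (hA : MeasurableSet A) (hsymm : Prod.swap ⁻¹' A = A) {S T : Set α} (hS : MeasurableSet S)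
    (hT : MeasurableSet T) (hST : E.card * (ν.prod ν) (S ×ˢ T ∩ Aᶜ) < ν S * ν T) :
    Measure.pi (fun _ : ι => ν) {x | ∀ e ∈ E, (x e.1, x e.2) ∈ A} ≠ 0 := by
  set J : ι → Set α := fun k => if side k then T else S
  have hJ : ∀ k, MeasurableSet (J k) := fun k => by unfold J; split <;> assumption
  set P := Measure.pi (fun _ : ι => ν) (univ.pi J)
  set bad : ι × ι → Set (ι → α) := fun e => univ.pi J ∩ (fun x => (x e.1, x e.2)) ⁻¹' Aᶜ
  have hbad : ∀ e ∈ E,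
      Measure.pi (fun _ => ν) (bad e) * (ν S * ν T) = P * (ν.prod ν) (S ×ˢ T ∩ Aᶜ) := by
    intro e he
    have key := pi_univ_pi_inter_preimage_pair_mul (fun _ => ν) hJ
      (fun h => hE e he (congrArg side h)) hA.compl
    have hsymmc : Prod.swap ⁻¹' Aᶜ = Aᶜ := by rw [preimage_compl, hsymm]
    cases h1 : side e.1 <;> cases h2 : side e.2 <;>
      simp only [J, h1, h2, ↓reduceIte, Bool.false_eq_true] at key
    · exact absurd (h1.trans h2.symm) (hE e he)
    · exact key
    · rwa [mul_comm (ν T), prod_self_prod_comm_inter ν hA.compl hsymmc hS hT] at key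
    · exact absurd (h1.trans h2.symm) (hE e he)
  have hK : ν S * ν T ≠ 0 := (zero_le.trans_lt hST).ne'
  have hP : P ≠ 0 := by
    rw [show P = ∏ k, ν (J k) from pi_pi _ _, Finset.prod_ne_zero_iff]
    intro k _
    unfold J
    split
    exacts [right_ne_zero_of_mul hK, left_ne_zero_of_mul hK]
  have hsum : ∑ e ∈ E, Measure.pi (fun _ => ν) (bad e) < P := by
    refine lt_of_mul_lt_mul_right' (a := ν S * ν T) ?_
    calc (∑ e ∈ E, Measure.pi (fun _ => ν) (bad e)) * (ν S * ν T)
        = P * (E.card * (ν.prod ν) (S ×ˢ T ∩ Aᶜ)) := by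
          rw [Finset.sum_mul, Finset.sum_congr rfl hbad, Finset.sum_const, nsmul_eq_mul]; ring
      _ < P * (ν S * ν T) := (ENNReal.mul_lt_mul_iff_right hP (measure_ne_top _ _)).2 hST
  have hcover : univ.pi J ⊆ {x | ∀ e ∈ E, (x e.1, x e.2) ∈ A} ∪ ⋃ e ∈ E, bad e := by
    intro x hx
    rw [mem_union, or_iff_not_imp_left]
    intro hgood
    simp only [mem_ofPred_eq, not_forall] at hgood
    obtain ⟨e, he, hxe⟩ := hgood
    exact mem_biUnion he ⟨hx, hxe⟩
  intro h0
  refine (hsum.trans_le ?_).false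
  calc P ≤ Measure.pi (fun _ => ν) ({x | ∀ e ∈ E, (x e.1, x e.2) ∈ A} ∪ ⋃ e ∈ E, bad e) :=
        measure_mono hcover
    _ ≤ ∑ e ∈ E, Measure.pi (fun _ => ν) (bad e) := by
        grw [measure_union_le, h0, zero_add, measure_biUnion_finset_le]

end MeasureTheory.Measure

lemma exists_measure_prod_inter_compl_lt {E : Type*} [NormedAddCommGroup E] [NormedSpace ℝ E]
    [FiniteDimensional ℝ E] [MeasurableSpace E] [BorelSpace E] (ν : Measure E)
    [IsFiniteMeasure ν] {A : Set (E × E)} (hA : MeasurableSet A) (hA0 : (ν.prod ν) A ≠ 0)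
    {c : ℝ≥0∞} (hc : c ≠ ⊤) :
    ∃ S T : Set E, MeasurableSet S ∧ MeasurableSet T ∧
      c * (ν.prod ν) (S ×ˢ T ∩ Aᶜ) < ν S * ν T := by
  set μ := ν.prod ν
  have : (ae (μ.restrict A)).NeBot := ae_neBot.2 (by rwa [Ne, Measure.restrict_eq_zero])
  obtain ⟨q, hqA, hdens, hdens_compl⟩ := ((ae_restrict_mem hA).and (ae_restrict_of_ae
    ((Besicovitch.ae_tendsto_measure_inter_div_of_measurableSet μ hA).and
      (Besicovitch.ae_tendsto_measure_inter_div_of_measurableSet μ hA.compl)))).exists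
  rw [indicator_of_mem hqA] at hdens
  rw [indicator_of_notMem (notMem_compl_iff.2 hqA)] at hdens_compl
  have hlim := ENNReal.Tendsto.const_mul hdens_compl (Or.inr hc)
  rw [mul_zero] at hlim
  obtain ⟨r, hpos, hlt⟩ := ((hdens.eventually (lt_mem_nhds zero_lt_one)).and
    (hlim.eventually (gt_mem_nhds zero_lt_one))).exists
  have hball_pos : μ (Metric.closedBall q r) ≠ 0 := fun h0 => by
    simp [measure_mono_null inter_subset_right h0] at hpos
  have hball : Metric.closedBall q r = Metric.closedBall q.1 r ×ˢ Metric.closedBall q.2 r :=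
    (closedBall_prod_same q.1 q.2 r).symm
  refine ⟨Metric.closedBall q.1 r, Metric.closedBall q.2 r, measurableSet_closedBall,
    measurableSet_closedBall, ?_⟩
  rw [← Measure.prod_prod, ← hball, inter_comm]
  rwa [← mul_div_assoc, ENNReal.div_lt_iff (Or.inl hball_pos) (Or.inl (measure_ne_top _ _)),
    one_mul] at hlt

instance : IsProbabilityMeasure (volume.restrict I01) := ⟨by simp [I01]⟩

lemma volume_restrict_cube (n : ℕ) :
    volume.restrict (cube n) = Measure.pi fun _ : Fin n => volume.restrict I01 := by
  rw [cube, volume_pi, Measure.restrict_pi_pi]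

lemma volume_restrict_I01_prod_I01 :
    volume.restrict (I01 ×ˢ I01) = (volume.restrict I01).prod (volume.restrict I01) := by
  rw [Measure.volume_eq_prod, Measure.prod_restrict]

def twoColoredProduct {n : ℕ} (B R : SimpleGraph (Fin n)) (W : ℝ → ℝ → ℝ)
    (x : Fin n → ℝ) : ℝ :=
  (∏ p ∈ Finset.univ.filter (fun p : Fin n × Fin n => p.1 < p.2 ∧ B.Adj p.1 p.2),
      W (x p.1) (x p.2)) *
  (∏ p ∈ Finset.univ.filter (fun p : Fin n × Fin n => p.1 < p.2 ∧ R.Adj p.1 p.2),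
      (1 - W (x p.1) (x p.2)))

section TwoColoredProduct

variable {n : ℕ} {B R : SimpleGraph (Fin n)} {W : ℝ → ℝ → ℝ}

lemma measurable_twoColoredProduct (hW : Measurable (uncurry W)) :
    Measurable (twoColoredProduct B R W) := by
  have hpair : ∀ p : Fin n × Fin n, Measurable fun x : Fin n → ℝ => W (x p.1) (x p.2) :=
    fun p => hW.comp (f := fun x : Fin n → ℝ => (x p.1, x p.2)) (by fun_prop)
  exact (Finset.measurable_prod _ fun p _ => hpair p).mul
    (Finset.measurable_prod _ fun p _ => measurable_const.sub (hpair p))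

lemma twoColoredProduct_mem_unitInterval (hW : ∀ x ∈ I01, ∀ y ∈ I01, W x y ∈ unitInterval)
    {x : Fin n → ℝ} (hx : x ∈ cube n) : twoColoredProduct B R W x ∈ unitInterval :=
  have hxW : ∀ p : Fin n × Fin n, W (x p.1) (x p.2) ∈ unitInterval :=
    fun p => hW _ (hx p.1 trivial) _ (hx p.2 trivial)
  unitInterval.mul_mem (unitInterval.prod_mem fun p _ => hxW p)
    (unitInterval.prod_mem fun p _ => Icc.mem_iff_one_sub_mem.1 (hxW p))

lemma ae_eq_zero_or_one_of_ae_twoColoredProduct_eq_zero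
    (hbip : ∃ f : Fin n → Bool, ∀ i j, B.Adj i j ∨ R.Adj i j → f i ≠ f j)
    (hWm : Measurable (uncurry W)) (hWsymm : ∀ x ∈ I01, ∀ y ∈ I01, W x y = W y x)
    (h0 : ∀ᵐ x ∂volume.restrict (cube n), twoColoredProduct B R W x = 0) :
    ∀ᵐ q : ℝ × ℝ ∂volume.restrict (I01 ×ˢ I01), W q.1 q.2 = 0 ∨ W q.1 q.2 = 1 := by
  have hI : MeasurableSet (I01 ×ˢ I01) := measurableSet_Icc.prod measurableSet_Icc
  set A := {q : ℝ × ℝ | ¬(W q.1 q.2 = 0 ∨ W q.1 q.2 = 1)} ∩ I01 ×ˢ I01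
  have hA : MeasurableSet A :=
    ((measurableSet_eq_fun hWm measurable_const).union
      (measurableSet_eq_fun hWm measurable_const)).compl.inter hI
  have hsymm : Prod.swap ⁻¹' A = A := by
    ext ⟨u, v⟩
    simp only [A, mem_preimage, Prod.swap_prod_mk, mem_inter_iff, mem_prod, mem_ofPred_eq]
    constructor
    · rintro ⟨hW, hv, hu⟩
      exact ⟨by rwa [hWsymm v hv u hu] at hW, hu, hv⟩
    · rintro ⟨hW, hu, hv⟩
      exact ⟨by rwa [hWsymm u hu v hv] at hW, hv, hu⟩
  obtain ⟨f, hf⟩ := hbip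
  set E := Finset.univ.filter (fun p : Fin n × Fin n => p.1 < p.2 ∧ B.Adj p.1 p.2) ∪
    Finset.univ.filter (fun p : Fin n × Fin n => p.1 < p.2 ∧ R.Adj p.1 p.2)
  have hE : ∀ e ∈ E, f e.1 ≠ f e.2 := fun e he => hf _ _ <| by
    simp only [E, Finset.mem_union, Finset.mem_filter, Finset.mem_univ, true_and] at he
    exact he.imp And.right And.right
  by_contra hW
  have hA0 : ((volume.restrict I01).prod (volume.restrict I01)) A ≠ 0 := by
    rw [← volume_restrict_I01_prod_I01, Measure.restrict_eq_self _ inter_subset_right]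
    rwa [ae_iff, Measure.restrict_apply' hI] at hW
  obtain ⟨S, T, hS, hT, hST⟩ :=
    exists_measure_prod_inter_compl_lt _ hA hA0 (ENNReal.natCast_ne_top E.card)
  refine Measure.pi_setOf_forall_pair_mem_ne_zero _ f hE hA hsymm hS hT hST ?_
  rw [← volume_restrict_cube]
  refine measure_mono_null (fun x hx => ?_) (ae_iff.1 h0)
  have hxA : ∀ e ∈ E, ¬(W (x e.1) (x e.2) = 0 ∨ W (x e.1) (x e.2) = 1) :=
    fun e he => (hx e he).1
  refine mul_ne_zero (Finset.prod_ne_zero_iff.2 fun p hp => ?_)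
    (Finset.prod_ne_zero_iff.2 fun p hp => sub_ne_zero.2 ?_)
  · exact fun h => hxA p (Finset.mem_union_left _ hp) (Or.inl h)
  · exact fun h => hxA p (Finset.mem_union_right _ hp) (Or.inr h.symm)

lemma ae_twoColoredProduct_eq_zero_of_integral_eq_zero (hW : memW0 W)
    (h : ∫ x in cube n, twoColoredProduct B R W x = 0) :
    ∀ᵐ x ∂volume.restrict (cube n), twoColoredProduct B R W x = 0 := by
  have : IsFiniteMeasure (volume.restrict (cube n)) := by
    rw [volume_restrict_cube]; infer_instance
  have hbound : ∀ᵐ x ∂volume.restrict (cube n), twoColoredProduct B R W x ∈ unitInterval := by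
    filter_upwards [ae_restrict_mem (MeasurableSet.univ_pi fun _ => measurableSet_Icc)] with x hx
    exact twoColoredProduct_mem_unitInterval hW.2.2 hx
  have hint : Integrable (twoColoredProduct B R W) (volume.restrict (cube n)) :=
    .of_bound (measurable_twoColoredProduct hW.1).aestronglyMeasurable 1 <| by
      filter_upwards [hbound] with x hx
      rw [Real.norm_of_nonneg hx.1]
      exact hx.2
  exact (integral_eq_zero_iff_of_nonneg_ae (hbound.mono fun x hx => hx.1) hint).1 h

end TwoColoredProduct

theorem statement5_general (n : ℕ) (B R : SimpleGraph (Fin n))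
    (hbip : ∃ f : Fin n → Bool, ∀ i j, B.Adj i j ∨ R.Adj i j → f i ≠ f j)
    (W : ℝ → ℝ → ℝ) (hW : memW W) :
    ((∀ᵐ x ∂(volume.restrict (cube n)),
        (∏ p ∈ Finset.univ.filter (fun p : Fin n × Fin n => p.1 < p.2 ∧ B.Adj p.1 p.2),
            W (x p.1) (x p.2)) *
        (∏ p ∈ Finset.univ.filter (fun p : Fin n × Fin n => p.1 < p.2 ∧ R.Adj p.1 p.2),
            (1 - W (x p.1) (x p.2))) = 0) →
      ∀ᵐ q : ℝ × ℝ ∂(volume.restrict (I01 ×ˢ I01)), W q.1 q.2 = 0 ∨ W q.1 q.2 = 1) ∧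
    (memW0 W →
      (∫ x in cube n,
        (∏ p ∈ Finset.univ.filter (fun p : Fin n × Fin n => p.1 < p.2 ∧ B.Adj p.1 p.2),
            W (x p.1) (x p.2)) *
        (∏ p ∈ Finset.univ.filter (fun p : Fin n × Fin n => p.1 < p.2 ∧ R.Adj p.1 p.2),
            (1 - W (x p.1) (x p.2)))) = 0 →
      ∀ᵐ q : ℝ × ℝ ∂(volume.restrict (I01 ×ˢ I01)), W q.1 q.2 = 0 ∨ W q.1 q.2 = 1) := by
  have zero_or_one := ae_eq_zero_or_one_of_ae_twoColoredProduct_eq_zero hbip hW.1 hW.2.1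
  exact ⟨zero_or_one, fun hW0 hint =>
    zero_or_one (ae_twoColoredProduct_eq_zero_of_integral_eq_zero hW0 hint)⟩

/-- let `F` be a bipartite graph on `n` vertices with edges 2-colored by
two (disjoint) graphs `B` (blue) and `R` (red), and let `W ∈ 𝒲`.
(a) If `∏_{ij∈B} W(x_i,x_j) ∏_{ij∈R} (1 − W(x_i,x_j)) = 0` for a.e. `x ∈ [0,1]ⁿ`,
then `W ∈ {0,1}` a.e. on `[0,1]²`.
(b) If moreover `W ∈ 𝒲₀`, the vanishing of the integral of this product already
implies `W ∈ {0,1}` a.e. -/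
theorem statement5 (n : ℕ) (B R : SimpleGraph (Fin n))
    (hdisj : ∀ i j, ¬ (B.Adj i j ∧ R.Adj i j))
    (hbip : ∃ f : Fin n → Bool, ∀ i j, B.Adj i j ∨ R.Adj i j → f i ≠ f j)
    (W : ℝ → ℝ → ℝ) (hW : memW W) :
    ((∀ᵐ x ∂(volume.restrict (cube n)),
        (∏ p ∈ Finset.univ.filter (fun p : Fin n × Fin n => p.1 < p.2 ∧ B.Adj p.1 p.2),
            W (x p.1) (x p.2)) *
        (∏ p ∈ Finset.univ.filter (fun p : Fin n × Fin n => p.1 < p.2 ∧ R.Adj p.1 p.2),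
            (1 - W (x p.1) (x p.2))) = 0) →
      ∀ᵐ q : ℝ × ℝ ∂(volume.restrict (I01 ×ˢ I01)), W q.1 q.2 = 0 ∨ W q.1 q.2 = 1) ∧
    (memW0 W →
      (∫ x in cube n,
        (∏ p ∈ Finset.univ.filter (fun p : Fin n × Fin n => p.1 < p.2 ∧ B.Adj p.1 p.2),
            W (x p.1) (x p.2)) *
        (∏ p ∈ Finset.univ.filter (fun p : Fin n × Fin n => p.1 < p.2 ∧ R.Adj p.1 p.2),
            (1 - W (x p.1) (x p.2)))) = 0 →
      ∀ᵐ q : ℝ × ℝ ∂(volume.restrict (I01 ×ˢ I01)), W q.1 q.2 = 0 ∨ W q.1 q.2 = 1) :=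
  statement5_general n B R hbip W hW
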